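/- arXiv:2604.09558 — 4 statements merged into one kernel-verified Lean document; each statement's English description precedes it below -/
import Mathlib

section
/- If an n-dimensional virtual tensor's mapping function f(I⃗) = S⃗·I⃗ + b(I⃗) has dimension 1 as a contiguous dimension (i.e., it is fully contiguous), then f is of the form f(I⃗) = (row-major offset of I⃗) + C for a constant C; consequently f maps the index set of the tensor bijectively onto a contiguous integer interval of length equal to the number of tensor elements. -/
/-!
A constant bias makes `f` the row-major offset `∑ i, I i * ∏ j > i, D j` shifted by `C := b 0`.
The row-major offset reads `I` as a mixed-radix numeral whose last digit is least significant;
after reversing the coordinates this is Mathlib's `finPiFinEquiv`, so it is a bijection from the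
index box onto `[0, ∏ i, D i)`, and the shift by `C` moves that interval to `[C, C + ∏ i, D i)`.
-/

open Finset

theorem Fin.map_castLEEmb_univ {n : ℕ} (i : Fin n) :
    (univ : Finset (Fin i)).map (Fin.castLEEmb i.is_lt.le) = Iio i := by
  ext j
  simp only [mem_map, mem_univ, true_and, mem_Iio, Fin.lt_def]
  exact ⟨fun ⟨k, hk⟩ => hk ▸ k.is_lt, fun hj => ⟨⟨j, hj⟩, rfl⟩⟩

theorem Fin.prod_Ioi_rev {M : Type*} [CommMonoid M] {n : ℕ} (f : Fin n → M) (i : Fin n) :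
    ∏ j ∈ Ioi i.rev, f j = ∏ j : Fin i, f (Fin.castLE i.is_lt.le j).rev := by
  rw [← Fin.map_revPerm_Iio, prod_map, ← Fin.map_castLEEmb_univ, prod_map]
  rfl

theorem Set.bijOn_of_equiv_pi_fin {ι : Type*} {D : ι → ℕ} {N : ℕ} (g : (ι → ℕ) → ℕ)
    (e : (∀ i, Fin (D i)) ≃ Fin N) (he : ∀ f, g (fun i => f i) = e f) :
    Set.BijOn g {I | ∀ i, I i < D i} (Set.Iio N) := by
  refine ⟨fun I hI => ?_, fun I hI I' hI' h => ?_, fun m hm => ?_⟩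
  · rw [Set.mem_Iio, he fun i => ⟨I i, hI i⟩]
    exact (e _).is_lt
  · rw [he fun i => ⟨I i, hI i⟩, he fun i => ⟨I' i, hI' i⟩] at h
    funext i
    exact congrArg Fin.val (congrFun (e.injective (Fin.ext h)) i)
  · refine ⟨fun i => e.symm ⟨m, hm⟩ i, fun i => (e.symm ⟨m, hm⟩ i).is_lt, ?_⟩
    rw [he, e.apply_symm_apply]

theorem Set.bijOn_natCast_add_Iio (C : ℤ) (N : ℕ) :
    Set.BijOn (fun m : ℕ => (m : ℤ) + C) (Set.Iio N) (Set.Ico C (C + N)) := by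
  refine ⟨fun m hm => ?_, fun m _ m' _ h => ?_, fun k hk => ?_⟩
  · simp only [Set.mem_Iio, Set.mem_Ico] at hm ⊢
    omega
  · simpa using h
  · simp only [Set.mem_Ico] at hk
    exact ⟨(k - C).toNat, by simp only [Set.mem_Iio]; omega, by simp only; omega⟩

section RowMajor

variable {n : ℕ} (D : Fin n → ℕ)

def rowMajorOffset (I : Fin n → ℕ) : ℕ := ∑ i, I i * ∏ j ∈ Ioi i, D j

def rowMajorEquiv : (∀ i, Fin (D i)) ≃ Fin (∏ i, D i) :=
  (Equiv.piCongrLeft (fun i => Fin (D i)) Fin.revPerm).symm.trans <|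
    finPiFinEquiv.trans <| finCongr <| Fintype.prod_equiv Fin.revPerm _ _ fun _ => rfl

theorem rowMajorEquiv_apply (f : ∀ i, Fin (D i)) :
    (rowMajorEquiv D f : ℕ) = rowMajorOffset D (fun i => f i) := by
  simp only [rowMajorEquiv, rowMajorOffset, Equiv.trans_apply, finCongr_apply, Fin.val_cast,
    finPiFinEquiv_apply, Equiv.piCongrLeft_symm_apply, Fin.revPerm_apply]
  refine Fintype.sum_equiv Fin.revPerm _ _ fun i => ?_
  rw [Fin.revPerm_apply, Fin.prod_Ioi_rev]

theorem bijOn_rowMajorOffset :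
    Set.BijOn (rowMajorOffset D) {I | ∀ i, I i < D i} (Set.Iio (∏ i, D i)) :=
  Set.bijOn_of_equiv_pi_fin _ (rowMajorEquiv D) fun f => (rowMajorEquiv_apply D f).symm

end RowMajor

/-- If dimension 1 is a contiguous dimension (full contiguity) of the mapping
f(I) = S·I + b(I), then f = row-major offset + constant C, and f maps the index
box bijectively onto a contiguous integer interval of length ∏ D i. -/
theorem stmt5 {n : ℕ} (D S : Fin n → ℕ) (b : (Fin n → ℕ) → ℤ)
    (hS : ∀ i, S i = ∏ j ∈ Finset.Ioi i, D j)
    (hb : ∀ I I' : Fin n → ℕ, b I = b I') :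
    ∃ C : ℤ,
      (∀ I : Fin n → ℕ, (∀ i, I i < D i) →
        (∑ i, (S i : ℤ) * I i) + b I
          = (∑ i, (I i : ℤ) * ∏ j ∈ Finset.Ioi i, (D j : ℤ)) + C) ∧
      Set.BijOn (fun I : Fin n → ℕ => (∑ i, (S i : ℤ) * I i) + b I)
        {I | ∀ i, I i < D i}
        (Set.Ico C (C + ∏ i, (D i : ℤ))) := by
  have hf : (fun I : Fin n → ℕ => (∑ i, (S i : ℤ) * I i) + b I)
      = fun I => (rowMajorOffset D I : ℤ) + b 0 := by
    funext I
    simp [rowMajorOffset, hS, hb I 0, mul_comm]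
  refine ⟨b 0, fun I _ => ?_, ?_⟩
  · simp [congrFun hf I, rowMajorOffset]
  · have h := (Set.bijOn_natCast_add_Iio (b 0) _).comp (bijOn_rowMajorOffset D)
    rwa [hf, ← Nat.cast_prod]
end

section
/- If dimension d is a contiguous dimension of an n-dimensional virtual tensor of shape D⃗, then for every fixing of the first d−1 index coordinates, the mapping function f restricted to the remaining coordinates maps the suffix index space {0..D_d−1}×…×{0..D_n−1} bijectively onto a contiguous integer interval of length ∏_{i=d}^{n} D_i. -/
/-!
Once the first coordinates are fixed to those of `P`, the terms of index `< d` and the offset `b`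
are a constant `C`, while the remaining terms are the big-endian mixed-radix value of the digits
`I d, …, I (n-1)` in the radices `D d, …, D (n-1)`. Mixed-radix notation enumerates
`[0, ∏_{i ≥ d} D i)` bijectively: the leading digit is the quotient by the weight of the tail,
and the tail is the remainder.
-/

open Finset

section MixedRadix

variable {ι : Type*} [LinearOrder ι] (D : ι → ℕ)

def mixedRadixValue (s : Finset ι) (g : ι → ℕ) : ℕ :=
  ∑ i ∈ s, (∏ j ∈ s with i < j, D j) * g i

variable {D}

theorem mixedRadixValue_congr {s : Finset ι} {g g' : ι → ℕ} (h : ∀ i ∈ s, g i = g' i) :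
    mixedRadixValue D s g = mixedRadixValue D s g' :=
  sum_congr rfl fun i hi => by rw [h i hi]

theorem mixedRadixValue_insert_of_lt {a : ι} {s : Finset ι} (ha : ∀ x ∈ s, a < x)
    (g : ι → ℕ) :
    mixedRadixValue D (insert a s) g = (∏ j ∈ s, D j) * g a + mixedRadixValue D s g := by
  have has : a ∉ s := fun h => lt_irrefl a (ha a h)
  have hfilter : ∀ i ∈ s, {j ∈ insert a s | i < j} = {j ∈ s | i < j} := fun i hi => by
    rw [filter_insert, if_neg (ha i hi).asymm]
  rw [mixedRadixValue, sum_insert has, filter_insert, if_neg (lt_irrefl a),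
    filter_true_of_mem ha, mixedRadixValue, sum_congr rfl fun i hi => by rw [hfilter i hi]]

theorem mixedRadixValue_lt {s : Finset ι} {g : ι → ℕ} (hg : ∀ i ∈ s, g i < D i) :
    mixedRadixValue D s g < ∏ i ∈ s, D i := by
  classical
  induction s using Finset.induction_on_min with
  | empty => simp [mixedRadixValue]
  | insert a s ha ih =>
    have has : a ∉ s := fun h => lt_irrefl a (ha a h)
    rw [mixedRadixValue_insert_of_lt ha, prod_insert has]
    have hlow := ih fun i hi => hg i (mem_insert_of_mem hi)
    have hga : g a + 1 ≤ D a := hg a (mem_insert_self a s)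
    calc (∏ j ∈ s, D j) * g a + mixedRadixValue D s g
        < (∏ j ∈ s, D j) * (g a + 1) := by rw [mul_add_one]; omega
      _ ≤ (∏ j ∈ s, D j) * D a := Nat.mul_le_mul_left _ hga
      _ = D a * ∏ j ∈ s, D j := mul_comm _ _

theorem eqOn_of_mixedRadixValue_eq {s : Finset ι} {g g' : ι → ℕ}
    (hg : ∀ i ∈ s, g i < D i) (hg' : ∀ i ∈ s, g' i < D i)
    (h : mixedRadixValue D s g = mixedRadixValue D s g') : ∀ i ∈ s, g i = g' i := by
  classical
  induction s using Finset.induction_on_min with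
  | empty => simp
  | insert a s ha ih =>
    have hs := fun i hi => hg i (mem_insert_of_mem hi)
    have hs' := fun i hi => hg' i (mem_insert_of_mem hi)
    have hlow := mixedRadixValue_lt hs
    have hlow' := mixedRadixValue_lt hs'
    rw [mixedRadixValue_insert_of_lt ha, mixedRadixValue_insert_of_lt ha] at h
    have hpos : 0 < ∏ j ∈ s, D j := by omega
    have hga : g a = g' a := by
      have := congrArg (· / ∏ j ∈ s, D j) h
      simpa only [Nat.mul_add_div hpos, Nat.div_eq_of_lt hlow, Nat.div_eq_of_lt hlow',
        add_zero] using this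
    rw [hga, Nat.add_left_cancel_iff] at h
    intro i hi
    rcases mem_insert.mp hi with rfl | hi
    · exact hga
    · exact ih hs hs' h i hi

theorem exists_mixedRadixValue_eq {s : Finset ι} {P : ι → ℕ}
    (hP : ∀ i, P i < D i) {k : ℕ} (hk : k < ∏ i ∈ s, D i) :
    ∃ g : ι → ℕ, (∀ i, g i < D i) ∧ (∀ i ∉ s, g i = P i) ∧ mixedRadixValue D s g = k := by
  classical
  induction s using Finset.induction_on_min generalizing k with
  | empty => exact ⟨P, hP, fun _ _ => rfl, by simp_all [mixedRadixValue]⟩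
  | insert a s ha ih =>
    have has : a ∉ s := fun h => lt_irrefl a (ha a h)
    rw [prod_insert has, mul_comm] at hk
    have hpos : 0 < ∏ j ∈ s, D j := Nat.pos_of_mul_pos_right (Nat.zero_lt_of_lt hk)
    obtain ⟨g, hgD, hgP, hgk⟩ := ih (Nat.mod_lt k hpos)
    refine ⟨Function.update g a (k / ∏ j ∈ s, D j), fun i => ?_, fun i hi => ?_, ?_⟩
    · rcases eq_or_ne i a with rfl | hia
      · simpa using Nat.div_lt_of_lt_mul hk
      · simpa [Function.update_of_ne hia] using hgD i
    · rw [mem_insert, not_or] at hi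
      rw [Function.update_of_ne hi.1, hgP i hi.2]
    · rw [mixedRadixValue_insert_of_lt ha, Function.update_self,
        mixedRadixValue_congr fun i hi => Function.update_of_ne (ha i hi).ne' _ _, hgk,
        Nat.div_add_mod]

end MixedRadix

theorem Finset.Ici_filter_lt_of_le {ι : Type*} [LinearOrder ι] [LocallyFiniteOrderTop ι]
    {d i : ι} (hdi : d ≤ i) : {j ∈ Ici d | i < j} = Ioi i := by
  ext j
  simp only [mem_filter, mem_Ici, mem_Ioi, and_iff_right_iff_imp]
  exact fun hij => hdi.trans hij.le

section AffineLayout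

variable {ι : Type*} [Fintype ι] [LinearOrder ι] [LocallyFiniteOrderTop ι]
  [LocallyFiniteOrderBot ι]

theorem sum_mul_add_eq_add_mixedRadixValue {D S : ι → ℕ} {b : (ι → ℕ) → ℤ} {d : ι}
    (hS : ∀ i, d ≤ i → S i = ∏ j ∈ Ioi i, D j)
    (hb : ∀ I I' : ι → ℕ, (∀ i, i < d → I i = I' i) → b I = b I')
    {I P : ι → ℕ} (hIP : ∀ i, i < d → I i = P i) :
    (∑ i, (S i : ℤ) * I i) + b I
      = (∑ i ∈ Iio d, (S i : ℤ) * P i + b P) + mixedRadixValue D (Ici d) I := by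
  classical
  have hlow : ∑ i ∈ Iio d, (S i : ℤ) * I i = ∑ i ∈ Iio d, (S i : ℤ) * P i :=
    sum_congr rfl fun i hi => by rw [hIP i (mem_Iio.mp hi)]
  have hhigh : ∑ i ∈ Ici d, (S i : ℤ) * I i = mixedRadixValue D (Ici d) I := by
    rw [mixedRadixValue]
    push_cast
    refine sum_congr rfl fun i hi => ?_
    rw [hS i (mem_Ici.mp hi), Ici_filter_lt_of_le (mem_Ici.mp hi)]
    push_cast; rfl
  rw [← sum_filter_add_sum_filter_not univ (· < d), filter_gt_eq_Iio]
  simp only [not_lt, filter_le_eq_Ici]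
  rw [hlow, hhigh, hb I P hIP]
  ring

end AffineLayout

/-- If dimension d is contiguous, then for every fixing of the first d−1
coordinates, f maps the corresponding suffix index space bijectively onto a
contiguous integer interval of length ∏_{i ≥ d} D i. -/
theorem stmt6 {n : ℕ} (D S : Fin n → ℕ) (b : (Fin n → ℕ) → ℤ) (d : Fin n)
    (hS : ∀ i, d ≤ i → S i = ∏ j ∈ Finset.Ioi i, D j)
    (hb : ∀ I I' : Fin n → ℕ, (∀ i, i < d → I i = I' i) → b I = b I') :
    ∀ P : Fin n → ℕ, (∀ i, P i < D i) →
      ∃ C : ℤ,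
        Set.BijOn (fun I : Fin n → ℕ => (∑ i, (S i : ℤ) * I i) + b I)
          {I | (∀ i, I i < D i) ∧ ∀ i, i < d → I i = P i}
          (Set.Ico C (C + ∏ i ∈ Finset.Ici d, (D i : ℤ))) := by
  intro P hP
  rw [← Nat.cast_prod]
  set C := ∑ i ∈ Iio d, (S i : ℤ) * P i + b P
  have hf {I : Fin n → ℕ} (hIP : ∀ i, i < d → I i = P i) :
      (∑ i, (S i : ℤ) * I i) + b I = C + mixedRadixValue D (Ici d) I :=
    sum_mul_add_eq_add_mixedRadixValue hS hb hIP
  refine ⟨C, ?_, ?_, ?_⟩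
  · rintro I ⟨hID, hIP⟩
    have := mixedRadixValue_lt (s := Ici d) fun i _ => hID i
    simp only [Set.mem_Ico, hf hIP]
    omega
  · rintro I ⟨hID, hIP⟩ I' ⟨hI'D, hI'P⟩ h
    simp only [hf hIP, hf hI'P, add_right_inj, Nat.cast_inj] at h
    funext i
    rcases lt_or_ge i d with hi | hi
    · rw [hIP i hi, hI'P i hi]
    · exact eqOn_of_mixedRadixValue_eq (fun i _ => hID i) (fun i _ => hI'D i) h i (mem_Ici.mpr hi)
  · rintro y ⟨hCy, hyC⟩
    obtain ⟨I, hID, hIP, hIy⟩ :=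
      exists_mixedRadixValue_eq (s := Ici d) hP (k := (y - C).toNat) (by omega)
    have hIP' : ∀ i, i < d → I i = P i := fun i hi => hIP i (by simpa using hi)
    exact ⟨I, ⟨hID, hIP'⟩, by simp only [hf hIP', hIy]; omega⟩
end

section
/- For a Split operator along axis 1 that partitions a row-major 2D tensor X of shape (a,b) into X₁ of shape (a,b₁) and X₂ of shape (a,b₂) with b₁+b₂=b and a ≥ 2, b₁ ≥ 1, b₂ ≥ 1, the virtual tensor mapping of X₁ (index (i,j) ↦ i·b + j) has minimal contiguous dimension 2 (dimension 1 is not contiguous), i.e., the image of X₁'s index space is not a contiguous integer interval. -/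
/-- Split along axis 1 of a row-major (a,b) tensor with b = b₁+b₂, a ≥ 2,
b₁,b₂ ≥ 1: the first output's virtual mapping f(i,j) = i·b + j has minimal
contiguous dimension 2: each row maps onto a contiguous interval (dimension 2
is contiguous), but the image of the whole index space is not a contiguous
integer interval (dimension 1 is not contiguous). -/
theorem stmt9 (a b₁ b₂ : ℕ) (ha : 2 ≤ a) (hb₁ : 1 ≤ b₁) (hb₂ : 1 ≤ b₂) :
    (∀ i < a, ∃ C : ℕ,
      (fun j => i * (b₁ + b₂) + j) '' Set.Iio b₁ = Set.Ico C (C + b₁)) ∧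
    ¬ ∃ lo hi : ℕ,
      (fun p : ℕ × ℕ => p.1 * (b₁ + b₂) + p.2) '' {p | p.1 < a ∧ p.2 < b₁}
        = Set.Ico lo hi := by
  constructor
  · intro i _
    refine ⟨i * (b₁ + b₂), ?_⟩
    ext x
    simp only [Set.mem_image, Set.mem_Iio, Set.mem_Ico]
    constructor
    · rintro ⟨j, hj, rfl⟩; omega
    · rintro ⟨h1, h2⟩; exact ⟨x - i * (b₁ + b₂), by omega, by omega⟩
  · rintro ⟨lo, hi, h⟩
    have hmem : ∀ x, (∃ p : ℕ × ℕ, (p.1 < a ∧ p.2 < b₁) ∧ p.1 * (b₁ + b₂) + p.2 = x)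
        ↔ lo ≤ x ∧ x < hi := by
      intro x
      have := Set.ext_iff.mp h x
      simpa [Set.mem_image, Set.mem_Ico] using this
    have h1 : lo ≤ b₁ - 1 ∧ b₁ - 1 < hi :=
      (hmem (b₁ - 1)).mp ⟨(0, b₁ - 1), ⟨by omega, by omega⟩, by simp⟩
    have h2 : lo ≤ b₁ + b₂ ∧ b₁ + b₂ < hi :=
      (hmem (b₁ + b₂)).mp ⟨(1, 0), ⟨by omega, by omega⟩, by simp⟩
    have h3 : ∃ p : ℕ × ℕ, (p.1 < a ∧ p.2 < b₁) ∧ p.1 * (b₁ + b₂) + p.2 = b₁ :=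
      (hmem b₁).mpr ⟨by omega, by omega⟩
    obtain ⟨⟨i, j⟩, ⟨hia, hjb⟩, hval⟩ := h3
    simp only at hval
    rcases Nat.eq_zero_or_pos i with rfl | hi0
    · simp at hval; omega
    · have : i * (b₁ + b₂) ≥ b₁ + b₂ := Nat.le_mul_of_pos_left _ hi0
      omega
end

section
/- The greedy algorithm that, starting from C = ∅, iteratively adds the element maximizing the discrete derivative of a monotone submodular function ℓ with ℓ(∅)=0, subject to a cardinality constraint of k elements, outputs a set C with ℓ(C) ≥ (1 − 1/e)·max_{|S|≤k} ℓ(S). -/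
lemma submod_sum' {E : Type*} [DecidableEq E] (ℓ : Finset E → ℝ)
    (hsub : ∀ A B : Finset E, A ⊆ B → ∀ e ∉ B,
      ℓ (insert e B) - ℓ B ≤ ℓ (insert e A) - ℓ A)
    (A : Finset E) : ∀ S : Finset E,
    ℓ (A ∪ S) ≤ ℓ A + ∑ e ∈ S, (ℓ (insert e A) - ℓ A) := by
  intro S
  induction S using Finset.induction with
  | empty => simp
  | @insert x T hx ih =>
    rw [Finset.sum_insert hx, Finset.union_insert]
    by_cases hxA : x ∈ A ∪ T
    · have h1 : insert x (A ∪ T) = A ∪ T := Finset.insert_eq_self.2 hxA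
      have h2 : x ∈ A := by
        rcases Finset.mem_union.1 hxA with h | h
        · exact h
        · exact absurd h hx
      have h3 : insert x A = A := Finset.insert_eq_self.2 h2
      rw [h1, h3]
      linarith
    · have h := hsub A (A ∪ T) Finset.subset_union_left x hxA
      linarith

/-- Nemhauser–Wolsey–Fisher: the greedy algorithm that starts from ∅ and, for k
steps, adds an element maximizing the discrete derivative of a monotone
submodular function ℓ with ℓ(∅) = 0, outputs C k with
ℓ(C k) ≥ (1 − 1/e) · max_{|S| ≤ k} ℓ(S). -/
theorem stmt12 {E : Type*} [DecidableEq E]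
    (ℓ : Finset E → ℝ)
    (hmono : ∀ A B : Finset E, A ⊆ B → ℓ A ≤ ℓ B)
    (hsub : ∀ A B : Finset E, A ⊆ B → ∀ e ∉ B,
      ℓ (insert e B) - ℓ B ≤ ℓ (insert e A) - ℓ A)
    (hempty : ℓ ∅ = 0)
    (k : ℕ) (C : ℕ → Finset E)
    (hC0 : C 0 = ∅)
    (hgreedy : ∀ t, t < k → ∃ e, C (t + 1) = insert e (C t) ∧
      ∀ e', ℓ (insert e' (C t)) - ℓ (C t) ≤ ℓ (insert e (C t)) - ℓ (C t)) :
    ∀ S : Finset E, S.card ≤ k → (1 - 1 / Real.exp 1) * ℓ S ≤ ℓ (C k) := by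
  intro S hS
  rcases Nat.eq_zero_or_pos k with hk | hk
  · subst hk
    have hSe : S = ∅ := Finset.card_eq_zero.1 (Nat.le_zero.1 hS)
    rw [hSe, hC0, hempty]
    simp
  have hk' : (0:ℝ) < (k:ℝ) := by exact_mod_cast hk
  have hinv : (1:ℝ)/(k:ℝ) * (k:ℝ) = 1 := one_div_mul_cancel hk'.ne'
  have hinvle : (1:ℝ)/(k:ℝ) ≤ 1 := by
    rw [div_le_one hk']; exact_mod_cast hk
  have hSnn : 0 ≤ ℓ S := by
    have := hmono ∅ S (Finset.empty_subset S); linarith [hempty]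
  -- key step inequality
  have key : ∀ t, t < k →
      ℓ S - ℓ (C (t+1)) ≤ (1 - 1/(k:ℝ)) * (ℓ S - ℓ (C t)) := by
    intro t ht
    obtain ⟨e, hCe, hmax⟩ := hgreedy t ht
    have hsum : ℓ S ≤ ℓ (C t) + ∑ x ∈ S, (ℓ (insert x (C t)) - ℓ (C t)) := by
      have h1 := submod_sum' ℓ hsub (C t) S
      have h2 := hmono S ((C t) ∪ S) Finset.subset_union_right
      linarith
    have hΔ0 : 0 ≤ ℓ (insert e (C t)) - ℓ (C t) := by
      have := hmono (C t) (insert e (C t)) (Finset.subset_insert _ _); linarith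
    have hsum2 : ∑ x ∈ S, (ℓ (insert x (C t)) - ℓ (C t)) ≤
        (S.card : ℝ) * (ℓ (insert e (C t)) - ℓ (C t)) := by
      calc ∑ x ∈ S, (ℓ (insert x (C t)) - ℓ (C t))
          ≤ ∑ _x ∈ S, (ℓ (insert e (C t)) - ℓ (C t)) :=
            Finset.sum_le_sum fun x _ => hmax x
        _ = (S.card : ℝ) * (ℓ (insert e (C t)) - ℓ (C t)) := by
            rw [Finset.sum_const, nsmul_eq_mul]
    have hcard : (S.card : ℝ) ≤ (k:ℝ) := by exact_mod_cast hS
    have hstep : ℓ S - ℓ (C t) ≤ (k:ℝ) * (ℓ (C (t+1)) - ℓ (C t)) := by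
      rw [hCe]
      nlinarith [mul_le_mul_of_nonneg_right hcard hΔ0]
    have h2 : (1/(k:ℝ)) * (ℓ S - ℓ (C t)) ≤ ℓ (C (t+1)) - ℓ (C t) := by
      have h3 := mul_le_mul_of_nonneg_left hstep (le_of_lt (one_div_pos.2 hk'))
      have h5 : 1/(k:ℝ) * ((k:ℝ) * (ℓ (C (t+1)) - ℓ (C t))) =
          ℓ (C (t+1)) - ℓ (C t) := by
        field_simp
      linarith
    have h4 : (1 - 1/(k:ℝ)) * (ℓ S - ℓ (C t)) =
        (ℓ S - ℓ (C t)) - (1/(k:ℝ)) * (ℓ S - ℓ (C t)) := by ring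
    linarith
  -- iterate
  have hiter : ∀ t, t ≤ k → ℓ S - ℓ (C t) ≤ (1 - 1/(k:ℝ))^t * (ℓ S - ℓ (C 0)) := by
    intro t
    induction t with
    | zero => intro _; simp
    | succ n ih =>
      intro hn
      have hn' : n < k := Nat.lt_of_succ_le hn
      have h1 := key n hn'
      have h2 := ih (Nat.le_of_lt hn')
      have hnn : (0:ℝ) ≤ 1 - 1/(k:ℝ) := by linarith
      calc ℓ S - ℓ (C (n+1)) ≤ (1 - 1/(k:ℝ)) * (ℓ S - ℓ (C n)) := h1
        _ ≤ (1 - 1/(k:ℝ)) * ((1 - 1/(k:ℝ))^n * (ℓ S - ℓ (C 0))) :=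
            mul_le_mul_of_nonneg_left h2 hnn
        _ = (1 - 1/(k:ℝ))^(n+1) * (ℓ S - ℓ (C 0)) := by ring
  have hfin := hiter k le_rfl
  rw [hC0, hempty, sub_zero] at hfin
  -- (1 - 1/k)^k ≤ exp (-1)
  have hnn : (0:ℝ) ≤ 1 - 1/(k:ℝ) := by linarith
  have hexp1 : (1 - 1/(k:ℝ)) ≤ Real.exp (-(1/(k:ℝ))) := by
    have := Real.add_one_le_exp (-(1/(k:ℝ))); linarith
  have hexp2 : (1 - 1/(k:ℝ))^k ≤ (Real.exp (-(1/(k:ℝ))))^k :=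
    pow_le_pow_left₀ hnn hexp1 k
  have hexp3 : (Real.exp (-(1/(k:ℝ))))^k = Real.exp (-1) := by
    rw [← Real.exp_nat_mul]
    congr 1
    field_simp
  have hexp4 : (1 - 1/(k:ℝ))^k ≤ Real.exp (-1) := hexp3 ▸ hexp2
  have hmul : (1 - 1/(k:ℝ))^k * ℓ S ≤ Real.exp (-1) * ℓ S :=
    mul_le_mul_of_nonneg_right hexp4 hSnn
  have hen : Real.exp (-1) = 1 / Real.exp 1 := by
    rw [Real.exp_neg]; exact (one_div _).symm
  rw [hen] at hmul
  linarith
end
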